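/- arXiv:1905.03595 — 2 statements merged into one kernel-verified Lean document; each statement's English description precedes it below -/
import Mathlib

section
/- Let R be a ring, let A be a nonnegative chain complex of flat right R-modules, and let S be a left R-module regarded as a chain complex concentrated in degree 0. If H₀(A) = 0, then H₁(A ⊗_R S) ≅ H₁(A) ⊗_R S. -/
/-!
Let `K = ker d₁`. Since `H₀(A) = 0`, the sequence `0 → K → A₁ → A₀ → 0` is exact, and as `A₀`
is flat it stays exact after tensoring with `S`; thus `K ⊗ S ≅ ker (d₁ ⊗ S)`. Writing `d₂` as
`A₂ --d₂'--> K ↪ A₁`, this isomorphism carries `im (d₂' ⊗ S)` onto the boundaries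
`im (d₂ ⊗ S)`, and right exactness of `- ⊗ S` identifies the quotient with
`(K / im d₂) ⊗ S = H₁(A) ⊗ S`.
-/

open TensorProduct LinearMap

namespace LinearMap

variable {R M N P L : Type*} [CommRing R] [AddCommGroup M] [Module R M] [AddCommGroup N]
  [Module R N] [AddCommGroup P] [Module R P] [AddCommGroup L] [Module R L]

lemma rTensor_injective_of_exact_of_flat [Module.Flat R P]
    (f : N →ₗ[R] P) (hf : Function.Surjective f) (g : M →ₗ[R] N) (hg : Function.Injective g)
    (H : Function.Exact g f) (A : Type*) [AddCommGroup A] [Module R A] :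
    Function.Injective (g.rTensor A) :=
  (g.lTensor_inj_iff_rTensor_inj A).mp (lTensor_injective_of_exact_of_flat f hf g hg H A)

noncomputable def kerRTensorEquivOfSurjective [Module.Flat R P]
    (f : N →ₗ[R] P) (hf : Function.Surjective f) (A : Type*) [AddCommGroup A] [Module R A] :
    ker (f.rTensor A) ≃ₗ[R] ker f ⊗[R] A :=
  .ofEq _ _ (rTensor_exact A (exact_subtype_ker_map f) hf).linearMap_ker_eq ≪≫ₗ
    (LinearEquiv.ofInjective _ (rTensor_injective_of_exact_of_flat f hf _
      (ker f).injective_subtype (exact_subtype_ker_map f) A)).symm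

lemma subtype_comp_kerRTensorEquivOfSurjective_symm [Module.Flat R P]
    (f : N →ₗ[R] P) (hf : Function.Surjective f) (A : Type*) [AddCommGroup A] [Module R A] :
    (ker (f.rTensor A)).subtype ∘ₗ (f.kerRTensorEquivOfSurjective hf A).symm.toLinearMap =
      (ker f).subtype.rTensor A :=
  rfl

noncomputable def quotientRangeRTensorEquiv (g : L →ₗ[R] M) (A : Type*) [AddCommGroup A]
    [Module R A] : (M ⧸ range g) ⊗[R] A ≃ₗ[R] (M ⊗[R] A) ⧸ range (g.rTensor A) :=
  quotientTensorEquiv A (range g) ≪≫ₗ Submodule.quotEquivOfEq _ _ (by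
    change range ((range g).subtype.rTensor A) = _
    rw [← range_comp_of_range_eq_top _ (range_eq_top.mpr
        (rTensor_surjective A g.surjective_rangeRestrict)),
      ← rTensor_comp, subtype_comp_codRestrict])

end LinearMap

namespace Submodule

variable {R M P L : Type*} [CommRing R] [AddCommGroup M] [Module R M] [AddCommGroup P]
  [Module R P] [AddCommGroup L] [Module R L]

noncomputable def quotientComapSubtypeRangeEquiv {p : Submodule R M} (e : P ≃ₗ[R] p)
    {g : L →ₗ[R] P} {f : L →ₗ[R] M} (hf : p.subtype ∘ₗ e.toLinearMap ∘ₗ g = f) :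
    (p ⧸ comap p.subtype (LinearMap.range f)) ≃ₗ[R] P ⧸ LinearMap.range g :=
  Quotient.equiv _ _ e.symm (by
    rw [← hf, LinearMap.range_comp, comap_map_eq_of_injective p.injective_subtype,
      LinearMap.range_comp, ← map_comp, LinearEquiv.symm_comp, map_id])

end Submodule

theorem stmt_4_general (R : Type) [CommRing R]
    (A₀ A₁ A₂ S : Type) [AddCommGroup A₀] [AddCommGroup A₁] [AddCommGroup A₂]
    [AddCommGroup S] [Module R A₀] [Module R A₁] [Module R A₂] [Module R S]
    [Module.Flat R A₀]
    (d₁ : A₁ →ₗ[R] A₀) (d₂ : A₂ →ₗ[R] A₁)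
    (hcomplex : d₁ ∘ₗ d₂ = 0)
    (hH₀ : LinearMap.range d₁ = ⊤) :
    Nonempty
      ((LinearMap.ker (d₁.rTensor S) ⧸
          Submodule.comap (LinearMap.ker (d₁.rTensor S)).subtype
            (LinearMap.range (d₂.rTensor S)))
        ≃ₗ[R]
       TensorProduct R
         (LinearMap.ker d₁ ⧸
           Submodule.comap (LinearMap.ker d₁).subtype (LinearMap.range d₂)) S) := by
  have hd₁ : Function.Surjective d₁ := range_eq_top.mp hH₀
  let d₂' : A₂ →ₗ[R] ker d₁ := d₂.codRestrict (ker d₁) fun x ↦ congr($hcomplex x)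
  have hfac : (ker d₁).subtype ∘ₗ d₂' = d₂ := subtype_comp_codRestrict _ _ _
  let H₁A : _ ≃ₗ[R] ker d₁ ⧸ range d₂' :=
    Submodule.quotientComapSubtypeRangeEquiv (.refl R _) hfac
  let H₁AS : _ ≃ₗ[R] (ker d₁ ⊗[R] S) ⧸ range (d₂'.rTensor S) :=
    Submodule.quotientComapSubtypeRangeEquiv (d₁.kerRTensorEquivOfSurjective hd₁ S).symm (by
      rw [← comp_assoc, subtype_comp_kerRTensorEquivOfSurjective_symm, ← rTensor_comp, hfac])
  exact ⟨H₁AS ≪≫ₗ (quotientRangeRTensorEquiv d₂' S).symm ≪≫ₗ H₁A.symm.rTensor S⟩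

/-- Let `R` be a (commutative) ring and let
`A : ⋯ → A₂ --d₂--> A₁ --d₁--> A₀ → 0` be a nonnegative chain complex of flat
`R`-modules (only the degrees `≤ 2` are relevant for `H₁`), and let `S` be an
`R`-module regarded as a complex concentrated in degree 0.  If `H₀(A) = 0`
(i.e. `d₁` is surjective), then `H₁(A ⊗_R S) ≅ H₁(A) ⊗_R S`, where `A ⊗_R S` is the
complex with `(A ⊗ S)ₙ = Aₙ ⊗ S` and boundaries `∂ ⊗ id`.  (This is the degeneration
of the Künneth spectral sequence `E²_{p,q} = Tor_p(H_q(A), S)` when `E²_{1,0} = 0`.) -/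
theorem stmt_4 (R : Type) [CommRing R]
    (A₀ A₁ A₂ S : Type) [AddCommGroup A₀] [AddCommGroup A₁] [AddCommGroup A₂]
    [AddCommGroup S] [Module R A₀] [Module R A₁] [Module R A₂] [Module R S]
    [Module.Flat R A₀] [Module.Flat R A₁] [Module.Flat R A₂]
    (d₁ : A₁ →ₗ[R] A₀) (d₂ : A₂ →ₗ[R] A₁)
    (hcomplex : d₁ ∘ₗ d₂ = 0)
    (hH₀ : LinearMap.range d₁ = ⊤) :
    Nonempty
      ((LinearMap.ker (d₁.rTensor S) ⧸
          Submodule.comap (LinearMap.ker (d₁.rTensor S)).subtype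
            (LinearMap.range (d₂.rTensor S)))
        ≃ₗ[R]
       TensorProduct R
         (LinearMap.ker d₁ ⧸
           Submodule.comap (LinearMap.ker d₁).subtype (LinearMap.range d₂)) S) :=
  stmt_4_general R A₀ A₁ A₂ S d₁ d₂ hcomplex hH₀
end

section
/- Let (X, Y) be a finite CW-pair and φ : π₁(X) → H a homomorphism to a free abelian group H, inducing coefficients in Q(H), the quotient field of Z[H]. If H_*(X, Y; Z) = 0 (ordinary relative integral homology vanishes in all degrees), then H_*(X, Y; Q(H)) = 0. -/
/-!
Push the cellular matrices `D i` forward to `ℤ[H]`. Both coefficient systems factor through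
`ℤ[H]`: the augmentation as `ℤ[H] → ℤ ⊆ ℚ`, and `Q(H)` as the injection `ℤ[H] → Q(H)`.
A nonvanishing `ρ × ρ` minor over `ℚ` lifts to a minor over `ℤ[H]` that stays nonzero in `Q(H)`,
so ranks over `Q(H)` dominate ranks over `ℚ`. Over a field, exactness of `C_{i+1} → C_i → C_{i-1}`
amounts to the rank count `dim C_i ≤ rk ∂_i + rk ∂_{i+1}` for a complex, so the count passes from
`ℚ`, where it holds by clearing denominators in the integral exactness, to `Q(H)`.
-/

open Module Submodule

namespace Matrix

theorem map_comp_vecMul {R S : Type*} [CommRing R] [CommRing S] {m n : Type*} [Fintype m]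
    (f : R →+* S) (A : Matrix m n R) (v : m → R) : (f ∘ v) ᵥ* A.map f = f ∘ (v ᵥ* A) :=
  funext fun i => (f.map_vecMul A v i).symm

section Field

variable {K : Type*} [Field K] {l m n : Type*} [Fintype l] [Fintype m] [Fintype n]

theorem finrank_range_vecMulLinear (A : Matrix m n K) :
    finrank K (LinearMap.range A.vecMulLinear) = A.rank := by
  rw [range_vecMulLinear, rank_eq_finrank_span_row]

theorem range_vecMulLinear_eq_top_iff (A : Matrix m n K) :
    LinearMap.range A.vecMulLinear = ⊤ ↔ A.rank = Fintype.card n := by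
  rw [Submodule.eq_top_iff_finrank_eq, finrank_range_vecMulLinear, finrank_fintype_fun_eq_card]

theorem card_le_rank_add_rank_of_ker_le_range {A : Matrix m n K} {B : Matrix l m K}
    (h : LinearMap.ker A.vecMulLinear ≤ LinearMap.range B.vecMulLinear) :
    Fintype.card m ≤ A.rank + B.rank := by
  have hrn := A.vecMulLinear.finrank_range_add_finrank_ker
  rw [finrank_range_vecMulLinear, finrank_fintype_fun_eq_card] at hrn
  have hker := Submodule.finrank_mono h
  rw [finrank_range_vecMulLinear] at hker
  omega

theorem ker_vecMulLinear_eq_range_of_mul_eq_zero {A : Matrix m n K} {B : Matrix l m K}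
    (hBA : B * A = 0) (h : Fintype.card m ≤ A.rank + B.rank) :
    LinearMap.ker A.vecMulLinear = LinearMap.range B.vecMulLinear := by
  have hle : LinearMap.range B.vecMulLinear ≤ LinearMap.ker A.vecMulLinear := by
    rintro _ ⟨u, rfl⟩
    simp [vecMul_vecMul, hBA]
  refine (Submodule.eq_of_le_of_finrank_le hle ?_).symm
  have hrn := A.vecMulLinear.finrank_range_add_finrank_ker
  rw [finrank_range_vecMulLinear, finrank_fintype_fun_eq_card] at hrn
  rw [finrank_range_vecMulLinear]
  omega

theorem exists_linearIndependent_rows {r : ℕ} (A : Matrix m n K) (hr : r ≤ A.rank) :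
    ∃ s : Fin r → m, LinearIndependent K (A.submatrix s id).row := by
  obtain ⟨κ, a, -, hspan, hli⟩ := exists_linearIndependent' K A.row
  have : Fintype κ := @Fintype.ofFinite _ hli.finite
  have hcard : Fintype.card κ = A.rank := by
    rw [linearIndependent_iff_card_eq_finrank_span.mp hli, Set.finrank, hspan,
      rank_eq_finrank_span_row]
  let ι : Fin r ↪ κ := (Fin.castLEEmb (hcard ▸ hr)).trans (Fintype.equivFin κ).symm.toEmbedding
  exact ⟨a ∘ ι, hli.comp ι ι.injective⟩

theorem exists_submatrix_det_ne_zero (A : Matrix m n K) :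
    ∃ (s : Fin A.rank → m) (t : Fin A.rank → n), (A.submatrix s t).det ≠ 0 := by
  obtain ⟨s, hs⟩ := A.exists_linearIndependent_rows le_rfl
  have hrank : (A.submatrix s id)ᵀ.rank = A.rank := by
    rw [rank_transpose, hs.rank_matrix, Fintype.card_fin]
  obtain ⟨t, ht⟩ := (A.submatrix s id)ᵀ.exists_linearIndependent_rows hrank.ge
  refine ⟨s, t, ?_⟩
  rw [← det_transpose]
  exact ((isUnit_iff_isUnit_det _).mp (linearIndependent_rows_iff_isUnit.mp ht)).ne_zero

end Field

section RingHom

variable {R : Type*} [CommRing R] {m n l : Type*} [Fintype m] [Fintype n] [Fintype l]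

theorem range_vecMulLinear_map_eq_top {S : Type*} [CommRing S] (f : R →+* S) {A : Matrix m n R}
    (h : LinearMap.range A.vecMulLinear = ⊤) :
    LinearMap.range (A.map f).vecMulLinear = ⊤ := by
  classical
  refine eq_top_iff.2 <| (Pi.basisFun S n).span_eq.ge.trans <| span_le.2 ?_
  rintro _ ⟨j, rfl⟩
  obtain ⟨u, hu⟩ : Pi.single j 1 ∈ LinearMap.range A.vecMulLinear := h ▸ mem_top
  refine ⟨f ∘ u, ?_⟩
  rw [vecMulLinear_apply] at hu
  rw [vecMulLinear_apply, map_comp_vecMul, hu, Pi.basisFun_apply]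
  ext i
  simp [Pi.single_apply]

variable {K F : Type*} [Field K] [Field F]

theorem rank_map_le_rank_map_of_injective (A : Matrix m n R) (e : R →+* K) {j : R →+* F}
    (hj : Function.Injective j) : (A.map e).rank ≤ (A.map j).rank := by
  obtain ⟨s, t, hdet⟩ := (A.map e).exists_submatrix_det_ne_zero
  have hdet' : ((A.map j).submatrix s t).det ≠ 0 := by
    rw [submatrix_map, ← RingHom.mapMatrix_apply, ← RingHom.map_det] at hdet ⊢
    exact (map_ne_zero_iff j hj).2 fun h => hdet (by rw [h, map_zero])
  calc (A.map e).rank = ((A.map j).submatrix s t).rank := by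
        rw [rank_of_det_ne_zero hdet', Fintype.card_fin]
    _ ≤ (A.map j).rank := rank_submatrix_le _ _ _

theorem range_vecMulLinear_map_eq_top_of_injective {A : Matrix m n R} (e : R →+* K)
    {j : R →+* F} (hj : Function.Injective j)
    (h : LinearMap.range (A.map e).vecMulLinear = ⊤) :
    LinearMap.range (A.map j).vecMulLinear = ⊤ := by
  rw [range_vecMulLinear_eq_top_iff] at h ⊢
  exact le_antisymm (rank_le_card_width _) (h ▸ rank_map_le_rank_map_of_injective A e hj)

theorem ker_vecMulLinear_map_eq_range_of_injective {A : Matrix m n R} {B : Matrix l m R}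
    (e : R →+* K) {j : R →+* F} (hj : Function.Injective j) (hBA : B.map j * A.map j = 0)
    (h : LinearMap.ker (A.map e).vecMulLinear ≤ LinearMap.range (B.map e).vecMulLinear) :
    LinearMap.ker (A.map j).vecMulLinear = LinearMap.range (B.map j).vecMulLinear := by
  refine ker_vecMulLinear_eq_range_of_mul_eq_zero hBA ?_
  calc Fintype.card m ≤ (A.map e).rank + (B.map e).rank :=
        card_le_rank_add_rank_of_ker_le_range h
    _ ≤ (A.map j).rank + (B.map j).rank :=
        add_le_add (rank_map_le_rank_map_of_injective A e hj)
          (rank_map_le_rank_map_of_injective B e hj)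

end RingHom

theorem ker_vecMulLinear_map_algebraMap_le_range {R K : Type*} [CommRing R] [Field K]
    [Algebra R K] [IsFractionRing R K] {l m n : Type*} [Fintype l] [Fintype m]
    {A : Matrix m n R} {B : Matrix l m R}
    (h : LinearMap.ker A.vecMulLinear ≤ LinearMap.range B.vecMulLinear) :
    LinearMap.ker (A.map (algebraMap R K)).vecMulLinear ≤
      LinearMap.range (B.map (algebraMap R K)).vecMulLinear := by
  intro w hw
  rw [LinearMap.mem_ker, vecMulLinear_apply] at hw
  obtain ⟨b, hb⟩ := IsLocalization.exist_integer_multiples_of_finite (nonZeroDivisors R) w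
  choose v hv using hb
  set c := algebraMap R K b
  have hc : c ≠ 0 := (IsLocalization.map_units K b).ne_zero
  have hvw : algebraMap R K ∘ v = c • w := funext fun i => by simp [hv i, Algebra.smul_def, c]
  have hvA : v ∈ LinearMap.ker A.vecMulLinear := by
    refine (LinearMap.mem_ker.2 <| funext fun i => IsFractionRing.injective R K ?_)
    rw [vecMulLinear_apply, ← Function.comp_apply (f := algebraMap R K), ← map_comp_vecMul, hvw,
      smul_vecMul, hw]
    simp
  obtain ⟨u, hu⟩ := h hvA
  refine ⟨c⁻¹ • (algebraMap R K ∘ u), ?_⟩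
  rw [vecMulLinear_apply] at hu
  rw [vecMulLinear_apply, smul_vecMul, map_comp_vecMul, hu, hvw, inv_smul_smul₀ hc]

end Matrix

theorem MonoidAlgebra.lift_one_comp_mapDomainAlgHom {R M N : Type*} [CommSemiring R] [Monoid M]
    [Monoid N] (φ : M →* N) :
    (lift R R N 1).comp (mapDomainAlgHom R R φ) = lift R R M 1 := by
  ext; simp

theorem stmt_15_general (π : Type) [Group π] (k : ℕ)
    (φ : π →* Multiplicative (Fin k → ℤ))
    (r : ℕ → ℕ)
    (D : ∀ i : ℕ, Matrix (Fin (r (i + 1))) (Fin (r i)) (MonoidAlgebra ℤ π))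
    (hcomplex : ∀ i, D (i + 1) * D i = 0)
    (ε : MonoidAlgebra ℤ π →+* ℤ)
    (hε : ε = ((MonoidAlgebra.lift ℤ ℤ π) 1).toRingHom)
    (ψ : MonoidAlgebra ℤ π →+*
      FractionRing (MonoidAlgebra ℤ (Multiplicative (Fin k → ℤ))))
    (hψ : ψ = (algebraMap (MonoidAlgebra ℤ (Multiplicative (Fin k → ℤ)))
        (FractionRing (MonoidAlgebra ℤ (Multiplicative (Fin k → ℤ))))).comp
        (MonoidAlgebra.mapDomainRingHom ℤ φ))
    (hH0 : LinearMap.range ((D 0).map ε).vecMulLinear = ⊤)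
    (hHi : ∀ i, LinearMap.ker ((D i).map ε).vecMulLinear
      = LinearMap.range ((D (i + 1)).map ε).vecMulLinear) :
    LinearMap.range ((D 0).map ψ).vecMulLinear = ⊤ ∧
    ∀ i, LinearMap.ker ((D i).map ψ).vecMulLinear
      = LinearMap.range ((D (i + 1)).map ψ).vecMulLinear := by
  let R := MonoidAlgebra ℤ (Multiplicative (Fin k → ℤ))
  have : IsDomain R := NoZeroDivisors.to_isDomain R
  let f := MonoidAlgebra.mapDomainRingHom ℤ φ
  let e : R →+* ℚ := (algebraMap ℤ ℚ).comp (MonoidAlgebra.lift ℤ ℤ _ 1).toRingHom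
  have hinj := IsFractionRing.injective R (FractionRing R)
  have hψD (i : ℕ) : (D i).map ψ = ((D i).map f).map (algebraMap R (FractionRing R)) := by
    rw [hψ, Matrix.map_map]; rfl
  have hεD (i : ℕ) : ((D i).map ε).map (algebraMap ℤ ℚ) = ((D i).map f).map e := by
    rw [hε, Matrix.map_map, Matrix.map_map, ← MonoidAlgebra.lift_one_comp_mapDomainAlgHom φ]
    rfl
  have hQ0 : LinearMap.range (((D 0).map f).map e).vecMulLinear = ⊤ :=
    hεD 0 ▸ Matrix.range_vecMulLinear_map_eq_top _ hH0
  have hQ (i : ℕ) : LinearMap.ker (((D i).map f).map e).vecMulLinear ≤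
      LinearMap.range (((D (i + 1)).map f).map e).vecMulLinear :=
    hεD i ▸ hεD (i + 1) ▸ Matrix.ker_vecMulLinear_map_algebraMap_le_range (hHi i).le
  refine ⟨hψD 0 ▸ Matrix.range_vecMulLinear_map_eq_top_of_injective e hinj hQ0, fun i => ?_⟩
  rw [hψD, hψD]
  refine Matrix.ker_vecMulLinear_map_eq_range_of_injective e hinj ?_ (hQ i)
  rw [← hψD, ← hψD, ← Matrix.map_mul, hcomplex, Matrix.map_zero _ (map_zero ψ)]

/-- criterion of Cochran–Orr–Teichner used in the paper: Let `(X, Y)`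
be a finite CW-pair whose relative cellular chain complex over `ℤ[π₁(X)]` is the
bounded complex of finitely generated free modules determined by the boundary
matrices `D i` (so `∂_{i+1} : C_{i+1} → C_i` is right multiplication by `D i`), and
let `φ : π₁(X) → H` be a homomorphism to a free abelian group `H ≅ ℤᵏ`, inducing
coefficients in `Q(H) = Frac(ℤ[H])`.  If the ordinary relative integral homology
vanishes in all degrees (homology of the complex pushed forward along the
augmentation `ε : ℤ[π₁X] → ℤ`), then the homology with `Q(H)`-coefficients (the
complex pushed forward along `ℤ[π₁X] → ℤ[H] → Q(H)`) vanishes in all degrees. -/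
theorem stmt_15 (π : Type) [Group π] (k : ℕ)
    (φ : π →* Multiplicative (Fin k → ℤ))
    (r : ℕ → ℕ) (N : ℕ) (hbound : ∀ i, N < i → r i = 0)
    (D : ∀ i : ℕ, Matrix (Fin (r (i + 1))) (Fin (r i)) (MonoidAlgebra ℤ π))
    (hcomplex : ∀ i, D (i + 1) * D i = 0)
    (ε : MonoidAlgebra ℤ π →+* ℤ)
    (hε : ε = ((MonoidAlgebra.lift ℤ ℤ π) 1).toRingHom)
    (ψ : MonoidAlgebra ℤ π →+*
      FractionRing (MonoidAlgebra ℤ (Multiplicative (Fin k → ℤ))))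
    (hψ : ψ = (algebraMap (MonoidAlgebra ℤ (Multiplicative (Fin k → ℤ)))
        (FractionRing (MonoidAlgebra ℤ (Multiplicative (Fin k → ℤ))))).comp
        (MonoidAlgebra.mapDomainRingHom ℤ φ))
    (hH0 : LinearMap.range ((D 0).map ε).vecMulLinear = ⊤)
    (hHi : ∀ i, LinearMap.ker ((D i).map ε).vecMulLinear
      = LinearMap.range ((D (i + 1)).map ε).vecMulLinear) :
    LinearMap.range ((D 0).map ψ).vecMulLinear = ⊤ ∧
    ∀ i, LinearMap.ker ((D i).map ψ).vecMulLinear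
      = LinearMap.range ((D (i + 1)).map ψ).vecMulLinear :=
  stmt_15_general π k φ r D hcomplex ε hε ψ hψ hH0 hHi
end
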